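/- arXiv:2105.00116 — 7 statements merged into one kernel-verified Lean document; each statement's English description precedes it below -/
import Mathlib

section
/- Given a factor system (φ, φ', f) of a Leibniz algebra A by a Leibniz algebra B, the vector space L = A ⊕ B with multiplication (m,i)(n,j) = (mn + φ(i)n + φ'(j)m + f(i,j), ij) is a Leibniz algebra. -/
set_option linter.unusedVariables false

structure LeibnizAlg (F : Type) [Field F] (A : Type) [AddCommGroup A] [Module F A] where
  mul : A →ₗ[F] A →ₗ[F] A
  leibniz : ∀ x y z, mul x (mul y z) = mul (mul x y) z + mul y (mul x z)

structure FactorSystem {F : Type} [Field F] {A B : Type}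
    [AddCommGroup A] [Module F A] [AddCommGroup B] [Module F B]
    (LA : LeibnizAlg F A) (LB : LeibnizAlg F B) where
  φ : B →ₗ[F] A →ₗ[F] A
  φ' : B →ₗ[F] A →ₗ[F] A
  f : B →ₗ[F] B →ₗ[F] A
  ax1 : ∀ i m n, LA.mul m (φ i n) = LA.mul (φ' i m) n + φ i (LA.mul m n)
  ax2 : ∀ i m n, LA.mul m (φ' i n) = φ' i (LA.mul m n) + LA.mul n (φ' i m)
  ax3 : ∀ i j m, LA.mul m (f i j) + φ' (LB.mul i j) m = φ' j (φ' i m) + φ i (φ' j m)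
  ax4 : ∀ i m n, φ i (LA.mul m n) = LA.mul (φ i m) n + LA.mul m (φ i n)
  ax5 : ∀ i j m, φ i (φ j m) = φ (LB.mul i j) m + φ j (φ i m) + LA.mul (f i j) m
  ax6 : ∀ i j m, φ i (φ' j m) = φ' j (φ i m) + φ' (LB.mul i j) m + LA.mul m (f i j)
  ax7 : ∀ i j k, f i (LB.mul j k) + φ i (f j k)
      = f (LB.mul i j) k + φ' k (f i j) + f j (LB.mul i k) + φ j (f i k)

variable {F : Type} [Field F] {A B L : Type}
  [AddCommGroup A] [Module F A] [AddCommGroup B] [Module F B]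
  [AddCommGroup L] [Module F L]

/-- The multiplication on `A ⊕ B` induced by a factor system. -/
def fsMul (LA : LeibnizAlg F A) (LB : LeibnizAlg F B) (FS : FactorSystem LA LB) :
    A × B → A × B → A × B := fun x y =>
  (LA.mul x.1 y.1 + FS.φ x.2 y.1 + FS.φ' y.2 x.1 + FS.f x.2 y.2, LB.mul x.2 y.2)

/-- `0 → A →σ L →π B → 0` is an extension of Leibniz algebras. -/
def IsExtension (LA : LeibnizAlg F A) (LL : LeibnizAlg F L) (LB : LeibnizAlg F B)
    (σ : A →ₗ[F] L) (π : L →ₗ[F] B) : Prop :=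
  (∀ m n, σ (LA.mul m n) = LL.mul (σ m) (σ n)) ∧
  (∀ x y, π (LL.mul x y) = LB.mul (π x) (π y)) ∧
  Function.Injective σ ∧ Function.Surjective π ∧
  ∀ x, π x = 0 ↔ ∃ m, σ m = x

/-- The factor system `FS` belongs to the extension (with injection `σ`) and section `T`. -/
def Belongs {LA : LeibnizAlg F A} {LB : LeibnizAlg F B} (LL : LeibnizAlg F L)
    (FS : FactorSystem LA LB) (σ : A →ₗ[F] L) (T : B →ₗ[F] L) : Prop :=
  (∀ i m, σ (FS.φ i m) = LL.mul (T i) (σ m)) ∧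
  (∀ i m, σ (FS.φ' i m) = LL.mul (σ m) (T i)) ∧
  ∀ i j, σ (FS.f i j) = LL.mul (T i) (T j) - T (LB.mul i j)

/-- Equivalence of factor systems via a linear map `E : B → A`. -/
def FSEquiv {LA : LeibnizAlg F A} {LB : LeibnizAlg F B}
    (FS1 FS2 : FactorSystem LA LB) : Prop :=
  ∃ E : B →ₗ[F] A,
    (∀ i m, FS2.φ i m = FS1.φ i m + LA.mul (E i) m) ∧
    (∀ i m, FS2.φ' i m = FS1.φ' i m + LA.mul m (E i)) ∧
    ∀ i j, FS2.f i j = FS1.f i j + FS1.φ' j (E i) + FS1.φ i (E j)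
      + LA.mul (E i) (E j) - E (LB.mul i j)

/-- A witness that `FS` belongs to a split extension (an extension admitting a
homomorphism section `S`). -/
structure SplitWitness {LA : LeibnizAlg F A} {LB : LeibnizAlg F B}
    (FS : FactorSystem LA LB) : Type 1 where
  Lc : Type
  [instG : AddCommGroup Lc]
  [instM : Module F Lc]
  LL : LeibnizAlg F Lc
  σ : A →ₗ[F] Lc
  π : Lc →ₗ[F] B
  T : B →ₗ[F] Lc
  ext : IsExtension LA LL LB σ π
  sec : ∀ i, π (T i) = i
  bel : Belongs LL FS σ T
  S : B →ₗ[F] Lc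
  secS : ∀ i, π (S i) = i
  homS : ∀ i j, S (LB.mul i j) = LL.mul (S i) (S j)

/-- A witness that `FS` belongs to an abelian extension. -/
structure AbelianExtWitness {LA : LeibnizAlg F A} {LB : LeibnizAlg F B}
    (FS : FactorSystem LA LB) : Type 1 where
  Lc : Type
  [instG : AddCommGroup Lc]
  [instM : Module F Lc]
  LL : LeibnizAlg F Lc
  σ : A →ₗ[F] Lc
  π : Lc →ₗ[F] B
  T : B →ₗ[F] Lc
  ext : IsExtension LA LL LB σ π
  sec : ∀ i, π (T i) = i
  bel : Belongs LL FS σ T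
  abel : ∀ x y, LL.mul x y = 0

/-- The product on `A ⊕ B` induced by a factor system satisfies the
Leibniz identity, hence makes `A ⊕ B` a Leibniz algebra. -/
theorem factorSystem_mul_leibniz (LA : LeibnizAlg F A) (LB : LeibnizAlg F B)
    (FS : FactorSystem LA LB) :
    ∀ x y z : A × B,
      fsMul LA LB FS x (fsMul LA LB FS y z)
        = fsMul LA LB FS (fsMul LA LB FS x y) z
          + fsMul LA LB FS y (fsMul LA LB FS x z) := by
  rintro ⟨m, i⟩ ⟨n, j⟩ ⟨p, k⟩
  have h3 : LA.mul m (FS.f j k)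
      = FS.φ' k (FS.φ' j m) + FS.φ j (FS.φ' k m) - FS.φ' (LB.mul j k) m := by
    rw [← FS.ax3 j k m]; abel
  have h7 : FS.f i (LB.mul j k)
      = FS.f (LB.mul i j) k + FS.φ' k (FS.f i j) + FS.f j (LB.mul i k)
        + FS.φ j (FS.f i k) - FS.φ i (FS.f j k) := by
    rw [← FS.ax7 i j k]; abel
  refine Prod.ext ?_ (LB.leibniz i j k)
  simp only [fsMul, Prod.fst_add, map_add, LinearMap.add_apply]
  rw [LA.leibniz m n p, FS.ax1 j m p, FS.ax2 k m n, FS.ax4 i n p, FS.ax5 i j p,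
    FS.ax6 i k n, h3, h7]
  abel
end

section
/- Given an extension 0 → A →σ L →π B → 0 of Leibniz algebras and a linear section T : B → L with πT = id_B, there exists a unique factor system (φ, φ', f) of A by B belonging to the extension and T, where φ(i)m = σ⁻¹(T(i)σ(m)), φ'(i)m = σ⁻¹(σ(m)T(i)), and σ(f(i,j)) = T(i)T(j) − T(ij). -/
set_option linter.unusedVariables false

variable {F : Type} [Field F] {A B L : Type}
  [AddCommGroup A] [Module F A] [AddCommGroup B] [Module F B]
  [AddCommGroup L] [Module F L]

/-- Given an extension of Leibniz algebras and a linear section `T`,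
there is a unique factor system belonging to the extension and `T`. -/
theorem exists_unique_factorSystem_belonging
    (LA : LeibnizAlg F A) (LB : LeibnizAlg F B) (LL : LeibnizAlg F L)
    (σ : A →ₗ[F] L) (π : L →ₗ[F] B) (T : B →ₗ[F] L)
    (hext : IsExtension LA LL LB σ π) (hT : ∀ i, π (T i) = i) :
    ∃! FS : FactorSystem LA LB, Belongs LL FS σ T := by
  
  obtain ⟨hσ, hπ, hinj, hsurj, hker⟩ := hext
  obtain ⟨r, hr⟩ := σ.exists_leftInverse_of_injective (LinearMap.ker_eq_bot.mpr hinj)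
  have hrσ : ∀ m, r (σ m) = m := fun m => by
    have := congrArg (fun g => g m) hr; simpa using this
  have hπσ : ∀ m, π (σ m) = (0 : B) := fun m => (hker _).mpr ⟨m, rfl⟩
  have hσr : ∀ x, π x = 0 → σ (r x) = x := by
    intro x hx
    obtain ⟨m, hm⟩ := (hker x).mp hx
    rw [← hm, hrσ]
  let φ : B →ₗ[F] A →ₗ[F] A := LinearMap.mk₂ F (fun i m => r (LL.mul (T i) (σ m)))
    (by intro i j m; simp) (by intro c i m; simp)
    (by intro i m n; simp) (by intro c i m; simp)
  let φ' : B →ₗ[F] A →ₗ[F] A := LinearMap.mk₂ F (fun i m => r (LL.mul (σ m) (T i)))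
    (by intro i j m; simp) (by intro c i m; simp)
    (by intro i m n; simp) (by intro c i m; simp)
  let f : B →ₗ[F] B →ₗ[F] A := LinearMap.mk₂ F
    (fun i j => r (LL.mul (T i) (T j) - T (LB.mul i j)))
    (by intro i j k; simp; module) (by intro c i j; simp; module)
    (by intro i j k; simp; module) (by intro c i j; simp; module)
  have bφ : ∀ i m, σ (φ i m) = LL.mul (T i) (σ m) := fun i m =>
    hσr _ (by simp [hπ, hπσ, hT])
  have bφ' : ∀ i m, σ (φ' i m) = LL.mul (σ m) (T i) := fun i m =>
    hσr _ (by simp [hπ, hπσ, hT])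
  have bf : ∀ i j, σ (f i j) = LL.mul (T i) (T j) - T (LB.mul i j) := fun i j =>
    hσr _ (by simp [hπ, hπσ, hT])
  refine ⟨⟨φ, φ', f, ?_, ?_, ?_, ?_, ?_, ?_, ?_⟩, ⟨bφ, bφ', bf⟩, ?_⟩
  · intro i m n
    apply hinj
    simp only [map_add, hσ, bφ, bφ']
    exact LL.leibniz (σ m) (T i) (σ n)
  · intro i m n
    apply hinj
    simp only [map_add, hσ, bφ', bφ]
    exact LL.leibniz (σ m) (σ n) (T i)
  · intro i j m
    apply hinj
    simp only [map_add, hσ, bφ, bφ', bf]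
    have := LL.leibniz (σ m) (T i) (T j)
    rw [map_sub]
    abel_nf
    linear_combination (norm := module) this
  · intro i m n
    apply hinj
    simp only [map_add, hσ, bφ]
    exact LL.leibniz (T i) (σ m) (σ n)
  · intro i j m
    apply hinj
    simp only [map_add, hσ, bφ, bf]
    have := LL.leibniz (T i) (T j) (σ m)
    simp only [map_sub, LinearMap.sub_apply]
    linear_combination (norm := module) this
  · intro i j m
    apply hinj
    simp only [map_add, hσ, bφ, bφ', bf]
    have := LL.leibniz (T i) (σ m) (T j)
    rw [map_sub]
    linear_combination (norm := module) this
  · intro i j k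
    apply hinj
    simp only [map_add, hσ, bφ, bφ', bf]
    have h1 := LL.leibniz (T i) (T j) (T k)
    have h2 : T (LB.mul i (LB.mul j k))
        = T (LB.mul (LB.mul i j) k) + T (LB.mul j (LB.mul i k)) := by
      rw [← map_add]; exact congrArg T (LB.leibniz i j k)
    simp only [map_sub, LinearMap.sub_apply]
    linear_combination (norm := module) h1 - h2
  · rintro FS' ⟨b1, b2, b3⟩
    obtain ⟨φ2, φ2', f2, a1, a2, a3, a4, a5, a6, a7⟩ := FS'
    simp only [FactorSystem.mk.injEq]
    refine ⟨?_, ?_, ?_⟩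
    · ext i m; exact hinj (by rw [bφ]; exact b1 i m)
    · ext i m; exact hinj (by rw [bφ']; exact b2 i m)
    · ext i j; exact hinj (by rw [bf]; exact b3 i j)
end

section
/- Let (φ, φ', f) be a factor system of Leibniz algebras A by B, let L = A ⊕ B with multiplication (m,i)(n,j) = (mn + φ(i)n + φ'(j)m + f(i,j), ij), and define σ(m) = (m,0), π(m,i) = i, T(i) = (0,i). Then 0 → A →σ L →π B → 0 is an extension of Leibniz algebras, πT = id_B, and the factor system (φ, φ', f) belongs to this extension and T. -/
set_option linter.unusedVariables false

variable {F : Type} [Field F] {A B L : Type}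
  [AddCommGroup A] [Module F A] [AddCommGroup B] [Module F B]
  [AddCommGroup L] [Module F L]

/-- With `L = A ⊕ B` equipped with the factor-system multiplication,
`σ m = (m,0)`, `π (m,i) = i`, `T i = (0,i)`, one gets an extension of Leibniz
algebras, `π ∘ T = id`, and the factor system belongs to this extension and `T`. -/
theorem factorSystem_gives_extension (LA : LeibnizAlg F A) (LB : LeibnizAlg F B)
    (FS : FactorSystem LA LB) :
    (∀ x y z : A × B,
        fsMul LA LB FS x (fsMul LA LB FS y z)
          = fsMul LA LB FS (fsMul LA LB FS x y) z
            + fsMul LA LB FS y (fsMul LA LB FS x z)) ∧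
    (∀ m n : A, ((LA.mul m n, 0) : A × B) = fsMul LA LB FS (m, 0) (n, 0)) ∧
    (∀ x y : A × B, (fsMul LA LB FS x y).2 = LB.mul x.2 y.2) ∧
    Function.Injective (fun m : A => ((m, 0) : A × B)) ∧
    Function.Surjective (fun x : A × B => x.2) ∧
    (∀ x : A × B, x.2 = 0 ↔ ∃ m : A, ((m, 0) : A × B) = x) ∧
    (∀ i : B, (((0, i) : A × B)).2 = i) ∧
    (∀ i m, ((FS.φ i m, 0) : A × B) = fsMul LA LB FS (0, i) (m, 0)) ∧
    (∀ i m, ((FS.φ' i m, 0) : A × B) = fsMul LA LB FS (m, 0) (0, i)) ∧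
    (∀ i j, ((FS.f i j, 0) : A × B)
        = fsMul LA LB FS (0, i) (0, j) - (0, LB.mul i j)) := by
  refine ⟨?_, ?_, ?_, ?_, ?_, ?_, ?_, ?_, ?_, ?_⟩
  · rintro ⟨m, i⟩ ⟨n, j⟩ ⟨p, k⟩
    simp only [fsMul, Prod.mk_add_mk, Prod.mk.injEq, map_add, LinearMap.add_apply]
    constructor
    · rw [LA.leibniz m n p, FS.ax1 j m p, FS.ax2 k m n, FS.ax4 i n p,
        FS.ax5 i j p, FS.ax6 i k n,
        eq_sub_of_add_eq (FS.ax3 j k m), eq_sub_of_add_eq (FS.ax7 i j k)]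
      abel
    · exact LB.leibniz i j k
  · intro m n; simp [fsMul]
  · intro x y; rfl
  · intro a b h; simpa using congrArg Prod.fst h
  · intro i; exact ⟨(0, i), rfl⟩
  · intro x
    constructor
    · intro h; exact ⟨x.1, Prod.ext rfl h.symm⟩
    · rintro ⟨m, rfl⟩; rfl
  · intro i; rfl
  · intro i m; simp [fsMul]
  · intro i m; simp [fsMul]
  · intro i j; simp [fsMul, Prod.ext_iff]
end

section
/- If factor systems (φ₁, φ₁', f₁) and (φ₂, φ₂', f₂) of Leibniz algebras A by B belong respectively to extensions 0 → A →σ₁ L₁ →π₁ B → 0 with section T₁ and 0 → A →σ₂ L₂ →π₂ B → 0 with section T₂, then the factor systems are equivalent if and only if the extensions are equivalent. -/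
set_option linter.unusedVariables false

variable {F : Type} [Field F] {A B L : Type}
  [AddCommGroup A] [Module F A] [AddCommGroup B] [Module F B]
  [AddCommGroup L] [Module F L]

section RetrAux

variable (σ : A →ₗ[F] L) (π : L →ₗ[F] B) (T : B →ₗ[F] L)

/-- The `A`-component of an element of `L` relative to the decomposition `L = σ(A) ⊕ T(B)`. -/
noncomputable def retrFun (hker : ∀ x, π x = 0 ↔ ∃ m, σ m = x)
    (hT : ∀ i, π (T i) = i) : L → A :=
  fun x => ((hker (x - T (π x))).mp (by simp [hT])).choose

lemma retrFun_spec (hker : ∀ x, π x = 0 ↔ ∃ m, σ m = x) (hT : ∀ i, π (T i) = i) (x : L) :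
    σ (retrFun σ π T hker hT x) = x - T (π x) :=
  ((hker (x - T (π x))).mp (by simp [hT])).choose_spec

/-- The retraction packaged as a linear map. -/
noncomputable def retrL (hinj : Function.Injective σ)
    (hker : ∀ x, π x = 0 ↔ ∃ m, σ m = x) (hT : ∀ i, π (T i) = i) : L →ₗ[F] A where
  toFun := retrFun σ π T hker hT
  map_add' x y := hinj (by simp only [map_add, retrFun_spec]; abel)
  map_smul' c x := hinj (by
    simp only [map_smul, retrFun_spec, map_smul, smul_sub, RingHom.id_apply])

lemma retrL_spec (hinj : Function.Injective σ)
    (hker : ∀ x, π x = 0 ↔ ∃ m, σ m = x) (hT : ∀ i, π (T i) = i) (x : L) :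
    σ (retrL σ π T hinj hker hT x) = x - T (π x) :=
  retrFun_spec σ π T hker hT x

lemma retrL_decomp (hinj : Function.Injective σ)
    (hker : ∀ x, π x = 0 ↔ ∃ m, σ m = x) (hT : ∀ i, π (T i) = i) (x : L) :
    σ (retrL σ π T hinj hker hT x) + T (π x) = x := by
  rw [retrL_spec]; abel

lemma retrL_eq (hinj : Function.Injective σ)
    (hker : ∀ x, π x = 0 ↔ ∃ m, σ m = x) (hT : ∀ i, π (T i) = i) (m : A) (i : B)
    (x : L) (hx : x = σ m + T i) (hπ : π x = i) :
    retrL σ π T hinj hker hT x = m := by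
  apply hinj
  rw [retrL_spec, hπ, hx]; abel

end RetrAux

/-- Key decomposition of products in an extension relative to a belonging factor system. -/
lemma mul_decomp {LA : LeibnizAlg F A} {LB : LeibnizAlg F B} {LL : LeibnizAlg F L}
    {σ : A →ₗ[F] L} {π : L →ₗ[F] B} {T : B →ₗ[F] L} {FS : FactorSystem LA LB}
    (hext : IsExtension LA LL LB σ π) (hb : Belongs LL FS σ T)
    (m n : A) (i j : B) :
    LL.mul (σ m + T i) (σ n + T j)
      = σ (LA.mul m n + FS.φ i n + FS.φ' j m + FS.f i j) + T (LB.mul i j) := by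
  have h1 := hext.1 m n
  have h2 := hb.1 i n
  have h3 := hb.2.1 j m
  have h4 := hb.2.2 i j
  simp only [map_add, LinearMap.add_apply]
  rw [h1, h2, h3, h4]
  abel

/-- Factor systems belonging to two extensions (with sections) are
equivalent iff the extensions are equivalent. -/
theorem fsEquiv_iff_extEquiv {L₁ L₂ : Type}
    [AddCommGroup L₁] [Module F L₁] [AddCommGroup L₂] [Module F L₂]
    (LA : LeibnizAlg F A) (LB : LeibnizAlg F B)
    (LL1 : LeibnizAlg F L₁) (LL2 : LeibnizAlg F L₂)
    (σ₁ : A →ₗ[F] L₁) (π₁ : L₁ →ₗ[F] B) (T₁ : B →ₗ[F] L₁)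
    (σ₂ : A →ₗ[F] L₂) (π₂ : L₂ →ₗ[F] B) (T₂ : B →ₗ[F] L₂)
    (FS1 FS2 : FactorSystem LA LB)
    (hext1 : IsExtension LA LL1 LB σ₁ π₁) (hT1 : ∀ i, π₁ (T₁ i) = i)
    (hb1 : Belongs LL1 FS1 σ₁ T₁)
    (hext2 : IsExtension LA LL2 LB σ₂ π₂) (hT2 : ∀ i, π₂ (T₂ i) = i)
    (hb2 : Belongs LL2 FS2 σ₂ T₂) :
    FSEquiv FS1 FS2 ↔
      ∃ τ : L₁ ≃ₗ[F] L₂,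
        (∀ x y, τ (LL1.mul x y) = LL2.mul (τ x) (τ y)) ∧
        (∀ m, τ (σ₁ m) = σ₂ m) ∧ ∀ x, π₂ (τ x) = π₁ x := by
  obtain ⟨hσm1, hπm1, hinj1, hsurj1, hker1⟩ := hext1
  obtain ⟨hσm2, hπm2, hinj2, hsurj2, hker2⟩ := hext2
  have hπσ1 : ∀ m, π₁ (σ₁ m) = 0 := fun m => (hker1 (σ₁ m)).mpr ⟨m, rfl⟩
  have hπσ2 : ∀ m, π₂ (σ₂ m) = 0 := fun m => (hker2 (σ₂ m)).mpr ⟨m, rfl⟩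
  set r1 := retrL σ₁ π₁ T₁ hinj1 hker1 hT1 with hr1def
  set r2 := retrL σ₂ π₂ T₂ hinj2 hker2 hT2 with hr2def
  have hspec1 : ∀ x, σ₁ (r1 x) = x - T₁ (π₁ x) := retrL_spec σ₁ π₁ T₁ hinj1 hker1 hT1
  have hspec2 : ∀ x, σ₂ (r2 x) = x - T₂ (π₂ x) := retrL_spec σ₂ π₂ T₂ hinj2 hker2 hT2
  have hdec1 : ∀ x, σ₁ (r1 x) + T₁ (π₁ x) = x := retrL_decomp σ₁ π₁ T₁ hinj1 hker1 hT1
  have hdec2 : ∀ x, σ₂ (r2 x) + T₂ (π₂ x) = x := retrL_decomp σ₂ π₂ T₂ hinj2 hker2 hT2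
  have hr1eq : ∀ (m : A) (i : B) (x : L₁), x = σ₁ m + T₁ i → r1 x = m := by
    intro m i x hx
    refine retrL_eq σ₁ π₁ T₁ hinj1 hker1 hT1 m i x hx ?_
    rw [hx]; simp [hπσ1, hT1]
  have hr2eq : ∀ (m : A) (i : B) (x : L₂), x = σ₂ m + T₂ i → r2 x = m := by
    intro m i x hx
    refine retrL_eq σ₂ π₂ T₂ hinj2 hker2 hT2 m i x hx ?_
    rw [hx]; simp [hπσ2, hT2]
  have hπ1eq : ∀ (m : A) (i : B), π₁ (σ₁ m + T₁ i) = i := by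
    intro m i; simp [hπσ1, hT1]
  have hπ2eq : ∀ (m : A) (i : B), π₂ (σ₂ m + T₂ i) = i := by
    intro m i; simp [hπσ2, hT2]
  have hext1' : IsExtension LA LL1 LB σ₁ π₁ := ⟨hσm1, hπm1, hinj1, hsurj1, hker1⟩
  have hext2' : IsExtension LA LL2 LB σ₂ π₂ := ⟨hσm2, hπm2, hinj2, hsurj2, hker2⟩
  constructor
  · rintro ⟨E, hE1, hE2, hE3⟩
    set τ : L₁ →ₗ[F] L₂ := σ₂ ∘ₗ (r1 - E ∘ₗ π₁) + T₂ ∘ₗ π₁ with hτdef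
    set τ' : L₂ →ₗ[F] L₁ := σ₁ ∘ₗ (r2 + E ∘ₗ π₂) + T₁ ∘ₗ π₂ with hτ'def
    have hτ : ∀ x, τ x = σ₂ (r1 x - E (π₁ x)) + T₂ (π₁ x) := by
      intro x; simp [hτdef]
    have hτ' : ∀ z, τ' z = σ₁ (r2 z + E (π₂ z)) + T₁ (π₂ z) := by
      intro z; simp [hτ'def]
    have hτgen : ∀ (m : A) (i : B), τ (σ₁ m + T₁ i) = σ₂ (m - E i) + T₂ i := by
      intro m i
      rw [hτ, hr1eq m i _ rfl, hπ1eq]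
    have hτ'gen : ∀ (n : A) (j : B), τ' (σ₂ n + T₂ j) = σ₁ (n + E j) + T₁ j := by
      intro n j
      rw [hτ', hr2eq n j _ rfl, hπ2eq]
    have hlr : ∀ x, τ' (τ x) = x := by
      intro x
      rw [hτ, hτ'gen, sub_add_cancel, hdec1]
    have hrl : ∀ z, τ (τ' z) = z := by
      intro z
      rw [hτ', hτgen, add_sub_cancel_right, hdec2]
    refine ⟨LinearEquiv.ofLinear τ τ' (LinearMap.ext hrl) (LinearMap.ext hlr), ?_, ?_, ?_⟩
    · intro x y
      simp only [LinearEquiv.ofLinear_apply]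
      have hx := (hdec1 x).symm
      have hy := (hdec1 y).symm
      rw [hx, hy, mul_decomp hext1' hb1, hτgen, hτgen, hτgen,
        mul_decomp hext2' hb2]
      congr 1
      apply congrArg
      simp only [hE1, hE2, hE3, map_sub, map_add, LinearMap.sub_apply, LinearMap.add_apply]
      abel
    · intro m
      simp only [LinearEquiv.ofLinear_apply]
      have : σ₁ m = σ₁ m + T₁ (0 : B) := by simp
      rw [this, hτgen]
      simp
    · intro x
      simp only [LinearEquiv.ofLinear_apply, hτ]
      simp [hπσ2, hT2]
  · rintro ⟨τ, hmul, hσ, hπ⟩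
    set E : B →ₗ[F] A := r2 ∘ₗ (T₂ - (τ : L₁ →ₗ[F] L₂) ∘ₗ T₁) with hEdef
    have hσE : ∀ i, σ₂ (E i) = T₂ i - τ (T₁ i) := by
      intro i
      have h0 : π₂ (T₂ i - τ (T₁ i)) = 0 := by
        simp [map_sub, hT2, hπ, hT1]
      simp only [hEdef, LinearMap.comp_apply, LinearMap.sub_apply, LinearEquiv.coe_coe]
      rw [hspec2, h0, map_zero]
      abel
    -- τ ∘ σ₁ = σ₂ as maps on images of FS1 data
    have hσφ : ∀ i m, σ₂ (FS1.φ i m) = LL2.mul (τ (T₁ i)) (σ₂ m) := by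
      intro i m
      rw [← hσ, ← hσ m, hb1.1, hmul]
    have hσφ' : ∀ j m, σ₂ (FS1.φ' j m) = LL2.mul (σ₂ m) (τ (T₁ j)) := by
      intro j m
      rw [← hσ, ← hσ m, hb1.2.1, hmul]
    have hσf : ∀ i j, σ₂ (FS1.f i j) = LL2.mul (τ (T₁ i)) (τ (T₁ j)) - τ (T₁ (LB.mul i j)) := by
      intro i j
      rw [← hσ, hb1.2.2, map_sub, hmul]
    refine ⟨E, ?_, ?_, ?_⟩
    · intro i m
      apply hinj2
      rw [map_add, hb2.1, hσφ, hσm2, hσE]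
      simp only [map_sub, LinearMap.sub_apply]
      abel
    · intro j m
      apply hinj2
      rw [map_add, hb2.2.1, hσφ', hσm2, hσE]
      simp only [map_sub, LinearMap.sub_apply]
      abel
    · intro i j
      apply hinj2
      rw [map_sub, map_add, map_add, map_add, hb2.2.2, hσf, hσφ, hσφ', hσm2,
        hσE, hσE, hσE]
      simp only [map_sub, LinearMap.sub_apply]
      abel
end

section
/- Given one extension 0 → A →σ L →π B → 0 of Leibniz algebras with two sections T₁, T₂ (πT₁ = id = πT₂), the factor system belonging to the extension and T₁ is equivalent to the factor system belonging to the extension and T₂. -/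
set_option linter.unusedVariables false

variable {F : Type} [Field F] {A B L : Type}
  [AddCommGroup A] [Module F A] [AddCommGroup B] [Module F B]
  [AddCommGroup L] [Module F L]

/-- Factor systems belonging to the same extension via two different
sections `T₁`, `T₂` are equivalent. -/
theorem fsEquiv_of_same_extension
    (LA : LeibnizAlg F A) (LB : LeibnizAlg F B) (LL : LeibnizAlg F L)
    (σ : A →ₗ[F] L) (π : L →ₗ[F] B) (T₁ T₂ : B →ₗ[F] L)
    (hext : IsExtension LA LL LB σ π)
    (hT1 : ∀ i, π (T₁ i) = i) (hT2 : ∀ i, π (T₂ i) = i)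
    (FS1 FS2 : FactorSystem LA LB)
    (hb1 : Belongs LL FS1 σ T₁) (hb2 : Belongs LL FS2 σ T₂) :
    FSEquiv FS1 FS2 := by
  obtain ⟨hσ, hπ, hinj, hsurj, hker⟩ := hext
  obtain ⟨h1φ, h1φ', h1f⟩ := hb1
  obtain ⟨h2φ, h2φ', h2f⟩ := hb2
  have hEx : ∀ i : B, ∃ m : A, σ m = T₂ i - T₁ i := fun i =>
    (hker _).mp (by simp [map_sub, hT1, hT2])
  let E0 : B → A := fun i => (hEx i).choose
  have hE0 : ∀ i, σ (E0 i) = T₂ i - T₁ i := fun i => (hEx i).choose_spec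
  let E : B →ₗ[F] A :=
    { toFun := E0
      map_add' := fun i j => hinj (by simp [hE0, map_add]; abel)
      map_smul' := fun c i => hinj (by simp [hE0, map_smul, smul_sub]) }
  have hE : ∀ i, σ (E i) = T₂ i - T₁ i := hE0
  refine ⟨E, ?_, ?_, ?_⟩
  · intro i m
    apply hinj
    have e2 : T₂ i = T₁ i + σ (E i) := by rw [hE]; abel
    rw [map_add, h2φ, h1φ, hσ, e2]
    simp [LinearMap.add_apply]
  · intro i m
    apply hinj
    have e2 : T₂ i = T₁ i + σ (E i) := by rw [hE]; abel
    rw [map_add, h2φ', h1φ', hσ, e2]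
    simp
  · intro i j
    apply hinj
    have e2 : T₂ i = T₁ i + σ (E i) := by rw [hE]; abel
    have e2' : T₂ j = T₁ j + σ (E j) := by rw [hE]; abel
    have eij : T₂ (LB.mul i j) = T₁ (LB.mul i j) + σ (E (LB.mul i j)) := by
      rw [hE]; abel
    rw [map_sub, map_add, map_add, map_add, h2f, h1f, hσ, h1φ, h1φ', e2, e2', eij]
    simp only [map_add, LinearMap.add_apply, LinearMap.map_add]
    abel
end

section
/- If (φ, φ', f) is a factor system of Leibniz algebras A by B and E : B → A is any linear transformation, then the triple (ψ, ψ', g) defined by ψ(i) = φ(i) + ad^l_{E(i)}, ψ'(i) = φ'(i) + ad^r_{E(i)}, and g(i,j) = f(i,j) + φ'(j)E(i) + φ(i)E(j) + E(i)E(j) − E(ij) is again a factor system of A by B, and E is an equivalence between (φ,φ',f) and (ψ,ψ',g). -/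
set_option linter.unusedVariables false

variable {F : Type} [Field F] {A B L : Type}
  [AddCommGroup A] [Module F A] [AddCommGroup B] [Module F B]
  [AddCommGroup L] [Module F L]

/-- Any linear map `E : B → A` transports a factor system to an
equivalent factor system `(ψ, ψ', g)` given by the usual formulas. -/
theorem any_linear_map_gives_equivalent_factorSystem
    (LA : LeibnizAlg F A) (LB : LeibnizAlg F B) (FS : FactorSystem LA LB)
    (E : B →ₗ[F] A) :
    ∃ FS' : FactorSystem LA LB,
      (∀ i m, FS'.φ i m = FS.φ i m + LA.mul (E i) m) ∧
      (∀ i m, FS'.φ' i m = FS.φ' i m + LA.mul m (E i)) ∧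
      ∀ i j, FS'.f i j = FS.f i j + FS.φ' j (E i) + FS.φ i (E j)
        + LA.mul (E i) (E j) - E (LB.mul i j) := by
  
  refine ⟨⟨FS.φ + LA.mul ∘ₗ E, FS.φ' + LA.mul.flip ∘ₗ E,
    LinearMap.mk₂ F
      (fun i j => FS.f i j + FS.φ' j (E i) + FS.φ i (E j)
        + LA.mul (E i) (E j) - E (LB.mul i j))
      (by intro i i' j; simp only [map_add, LinearMap.add_apply]; abel)
      (by intro c i j; simp only [map_smul, LinearMap.smul_apply, smul_sub, smul_add])
      (by intro i j j'; simp only [map_add, LinearMap.add_apply]; abel)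
      (by intro c i j; simp only [map_smul, LinearMap.smul_apply, smul_sub, smul_add]),
    ?_, ?_, ?_, ?_, ?_, ?_, ?_⟩,
    by intro i m; simp, by intro i m; simp, by intro i j; simp⟩
  · -- ax1
    intro i m n
    simp only [LinearMap.add_apply, LinearMap.comp_apply, LinearMap.flip_apply,
      LinearMap.mk₂_apply, map_add, map_sub, LinearMap.sub_apply]
    rw [FS.ax1 i m n, LA.leibniz m (E i) n]
    abel
  · -- ax2
    intro i m n
    simp only [LinearMap.add_apply, LinearMap.comp_apply, LinearMap.flip_apply,
      LinearMap.mk₂_apply, map_add, map_sub, LinearMap.sub_apply]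
    rw [FS.ax2 i m n, LA.leibniz m n (E i)]
    abel
  · -- ax3
    intro i j m
    simp only [LinearMap.add_apply, LinearMap.comp_apply, LinearMap.flip_apply,
      LinearMap.mk₂_apply, map_add, map_sub, LinearMap.sub_apply]
    have h3 : FS.φ' (LB.mul i j) m
        = FS.φ' j (FS.φ' i m) + FS.φ i (FS.φ' j m) - LA.mul m (FS.f i j) := by
      rw [eq_sub_iff_add_eq, add_comm]; exact FS.ax3 i j m
    rw [h3, FS.ax2 j m (E i), FS.ax1 i m (E j), LA.leibniz m (E i) (E j)]
    abel
  · -- ax4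
    intro i m n
    simp only [LinearMap.add_apply, LinearMap.comp_apply, LinearMap.flip_apply,
      LinearMap.mk₂_apply, map_add, map_sub, LinearMap.sub_apply]
    rw [FS.ax4 i m n, LA.leibniz (E i) m n]
    abel
  · -- ax5
    intro i j m
    simp only [LinearMap.add_apply, LinearMap.comp_apply, LinearMap.flip_apply,
      LinearMap.mk₂_apply, map_add, map_sub, LinearMap.sub_apply]
    rw [FS.ax5 i j m, FS.ax4 i (E j) m, FS.ax1 j (E i) m, LA.leibniz (E i) (E j) m]
    abel
  · -- ax6
    intro i j m
    simp only [LinearMap.add_apply, LinearMap.comp_apply, LinearMap.flip_apply,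
      LinearMap.mk₂_apply, map_add, map_sub, LinearMap.sub_apply]
    rw [FS.ax6 i j m, FS.ax4 i m (E j), FS.ax2 j (E i) m, LA.leibniz (E i) m (E j)]
    abel
  · -- ax7
    intro i j k
    simp only [LinearMap.add_apply, LinearMap.comp_apply, LinearMap.flip_apply,
      LinearMap.mk₂_apply, map_add, map_sub, LinearMap.sub_apply]
    have h7 : FS.f i (LB.mul j k)
        = FS.f (LB.mul i j) k + FS.φ' k (FS.f i j) + FS.f j (LB.mul i k)
          + FS.φ j (FS.f i k) - FS.φ i (FS.f j k) := by
      rw [eq_sub_iff_add_eq]; exact FS.ax7 i j k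
    have h3 : FS.φ' (LB.mul j k) (E i)
        = FS.φ' k (FS.φ' j (E i)) + FS.φ j (FS.φ' k (E i)) - LA.mul (E i) (FS.f j k) := by
      rw [eq_sub_iff_add_eq, add_comm]; exact FS.ax3 j k (E i)
    rw [h7, h3, LB.leibniz i j k, map_add, FS.ax6 i k (E j), FS.ax5 i j (E k),
      FS.ax4 i (E j) (E k), FS.ax2 k (E i) (E j), FS.ax1 j (E i) (E k),
      LA.leibniz (E i) (E j) (E k)]
    abel
end

section
/- Let (φ, φ', f) be a factor system of Leibniz algebras A by B. The following are equivalent: (a) (φ,φ',f) belongs to a split extension; (b) (φ,φ',f) is equivalent to some factor system (ψ,ψ',g) with g = 0; (c) there exists a linear map E : B → A such that f(i,j) = −φ'(j)E(i) − φ(i)E(j) − E(i)E(j) + E(ij) for all i,j ∈ B. -/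
set_option linter.unusedVariables false

variable {F : Type} [Field F] {A B L : Type}
  [AddCommGroup A] [Module F A] [AddCommGroup B] [Module F B]
  [AddCommGroup L] [Module F L]

set_option linter.unreachableTactic false
set_option linter.unusedTactic false

def fsMulLin (LA : LeibnizAlg F A) (LB : LeibnizAlg F B) (FS : FactorSystem LA LB) :
    (A × B) →ₗ[F] (A × B) →ₗ[F] (A × B) :=
  LinearMap.mk₂ F (fsMul LA LB FS)
    (by
      rintro ⟨m, i⟩ ⟨n, j⟩ ⟨p, k⟩
      simp only [fsMul, Prod.mk_add_mk, Prod.fst, Prod.snd, map_add, LinearMap.add_apply,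
        Prod.mk.injEq]
      try constructor <;> first | abel | trivial)
    (by
      rintro c ⟨m, i⟩ ⟨n, j⟩
      simp only [fsMul, Prod.smul_mk, Prod.fst, Prod.snd, map_smul, LinearMap.smul_apply,
        Prod.mk.injEq, smul_add]
      try constructor <;> first | abel | trivial)
    (by
      rintro ⟨m, i⟩ ⟨n, j⟩ ⟨p, k⟩
      simp only [fsMul, Prod.mk_add_mk, Prod.fst, Prod.snd, map_add, LinearMap.add_apply,
        Prod.mk.injEq]
      try constructor <;> first | abel | trivial)
    (by
      rintro c ⟨m, i⟩ ⟨n, j⟩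
      simp only [fsMul, Prod.smul_mk, Prod.fst, Prod.snd, map_smul, LinearMap.smul_apply,
        Prod.mk.injEq, smul_add]
      try constructor <;> first | abel | trivial)

lemma fsMulLin_apply (LA : LeibnizAlg F A) (LB : LeibnizAlg F B) (FS : FactorSystem LA LB)
    (x y : A × B) : fsMulLin LA LB FS x y = fsMul LA LB FS x y := rfl

def fsLeib (LA : LeibnizAlg F A) (LB : LeibnizAlg F B) (FS : FactorSystem LA LB) :
    LeibnizAlg F (A × B) where
  mul := fsMulLin LA LB FS
  leibniz := by
    rintro ⟨m, i⟩ ⟨n, j⟩ ⟨p, k⟩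
    simp only [fsMulLin_apply, fsMul, Prod.mk_add_mk, Prod.mk.injEq]
    constructor
    · simp only [map_add, LinearMap.add_apply]
      rw [LA.leibniz m n p, FS.ax1 j m p, FS.ax2 k m n, FS.ax4 i n p, FS.ax5 i j p,
        FS.ax6 i k n, eq_sub_of_add_eq (FS.ax3 j k m), eq_sub_of_add_eq' (FS.ax7 i j k)]
      abel
    · exact LB.leibniz i j k

section Helpers

variable (LA : LeibnizAlg F A) (LB : LeibnizAlg F B) (FS : FactorSystem LA LB)

lemma mul_inl_inl (m n : A) :
    fsMul LA LB FS (m, 0) (n, 0) = (LA.mul m n, 0) := by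
  simp [fsMul]

lemma mul_inr_inl (i : B) (m : A) :
    fsMul LA LB FS (0, i) (m, 0) = (FS.φ i m, 0) := by
  simp [fsMul]

lemma mul_inl_inr (m : A) (i : B) :
    fsMul LA LB FS (m, 0) (0, i) = (FS.φ' i m, 0) := by
  simp [fsMul]

lemma mul_inr_inr (i j : B) :
    fsMul LA LB FS (0, i) (0, j) = (FS.f i j, LB.mul i j) := by
  simp [fsMul]

variable (E : B →ₗ[F] A)

lemma mul_S_inl (i : B) (m : A) :
    fsMul LA LB FS (E i, i) (m, 0) = (FS.φ i m + LA.mul (E i) m, 0) := by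
  simp [fsMul]; abel

lemma mul_inl_S (m : A) (i : B) :
    fsMul LA LB FS (m, 0) (E i, i) = (FS.φ' i m + LA.mul m (E i), 0) := by
  simp [fsMul]; abel

lemma mul_S_S
    (hE : ∀ i j, FS.f i j = -FS.φ' j (E i) - FS.φ i (E j)
      - LA.mul (E i) (E j) + E (LB.mul i j)) (i j : B) :
    fsMul LA LB FS (E i, i) (E j, j) = (E (LB.mul i j), LB.mul i j) := by
  simp only [fsMul]
  rw [hE i j]
  exact Prod.ext (by module) rfl

end Helpers

/-- (c) implies (a): build the split extension on `A × B`. -/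
def cToSplit (LA : LeibnizAlg F A) (LB : LeibnizAlg F B) (FS : FactorSystem LA LB)
    (E : B →ₗ[F] A)
    (hE : ∀ i j, FS.f i j = -FS.φ' j (E i) - FS.φ i (E j)
      - LA.mul (E i) (E j) + E (LB.mul i j)) :
    SplitWitness FS where
  Lc := A × B
  LL := fsLeib LA LB FS
  σ := LinearMap.inl F A B
  π := LinearMap.snd F A B
  T := LinearMap.inr F A B
  ext := by
    refine ⟨?_, ?_, ?_, ?_, ?_⟩
    · intro m n
      exact (mul_inl_inl LA LB FS m n).symm
    · rintro ⟨m, i⟩ ⟨n, j⟩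
      rfl
    · intro a b h
      simpa using congrArg Prod.fst h
    · intro b
      exact ⟨(0, b), rfl⟩
    · rintro ⟨a, b⟩
      exact ⟨fun h => ⟨a, by simp [LinearMap.inl_apply]; exact (by simpa using h.symm)⟩,
        fun ⟨m, hm⟩ => by simpa using congrArg Prod.snd hm.symm⟩
  sec := fun i => rfl
  bel := by
    refine ⟨?_, ?_, ?_⟩
    · intro i m
      exact (mul_inr_inl LA LB FS i m).symm
    · intro i m
      exact (mul_inl_inr LA LB FS m i).symm
    · intro i j
      rw [show (fsLeib LA LB FS).mul ((LinearMap.inr F A B) i) ((LinearMap.inr F A B) j)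
          = (FS.f i j, LB.mul i j) from mul_inr_inr LA LB FS i j]
      simp [Prod.ext_iff]
  S := E.prod LinearMap.id
  secS := fun i => rfl
  homS := by
    intro i j
    exact (mul_S_S LA LB FS E hE i j).symm

/-- (a) implies (c). -/
lemma split_to_c {LA : LeibnizAlg F A} {LB : LeibnizAlg F B} {FS : FactorSystem LA LB}
    (W : SplitWitness FS) :
    ∃ E : B →ₗ[F] A, ∀ i j,
      FS.f i j = -FS.φ' j (E i) - FS.φ i (E j)
        - LA.mul (E i) (E j) + E (LB.mul i j) := by
  letI := W.instG
  letI := W.instM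
  obtain ⟨ρ, hρ⟩ := LinearMap.exists_leftInverse_of_injective W.σ
    (LinearMap.ker_eq_bot.mpr W.ext.2.2.1)
  refine ⟨ρ ∘ₗ (W.S - W.T), ?_⟩
  have hρσ : ∀ m, ρ (W.σ m) = m := fun m => LinearMap.congr_fun hρ m
  have hσE : ∀ i, W.σ ((ρ ∘ₗ (W.S - W.T)) i) = W.S i - W.T i := by
    intro i
    have hk : W.π (W.S i - W.T i) = 0 := by
      rw [map_sub, W.secS, W.sec, sub_self]
    obtain ⟨m, hm⟩ := (W.ext.2.2.2.2 _).mp hk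
    simp only [LinearMap.comp_apply, LinearMap.sub_apply]
    rw [← hm, hρσ]
  set E := ρ ∘ₗ (W.S - W.T) with hEdef
  intro i j
  apply W.ext.2.2.1
  simp only [map_add, map_sub, map_neg]
  rw [W.bel.2.2 i j, W.bel.2.1 j (E i), W.bel.1 i (E j), W.ext.1 (E i) (E j),
    hσE i, hσE j, hσE (LB.mul i j), W.homS i j]
  simp only [map_sub, LinearMap.sub_apply]
  abel

/-- (c) implies (b): the equivalent factor system with vanishing `f`. -/
lemma c_to_b (LA : LeibnizAlg F A) (LB : LeibnizAlg F B) (FS : FactorSystem LA LB)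
    (E : B →ₗ[F] A)
    (hE : ∀ i j, FS.f i j = -FS.φ' j (E i) - FS.φ i (E j)
      - LA.mul (E i) (E j) + E (LB.mul i j)) :
    ∃ FS' : FactorSystem LA LB, FSEquiv FS FS' ∧ FS'.f = 0 := by
  set LL := fsLeib LA LB FS with hLL
  have hmul : ∀ x y, LL.mul x y = fsMul LA LB FS x y := fun x y => rfl
  set φ2 : B →ₗ[F] A →ₗ[F] A := FS.φ + LA.mul ∘ₗ E with hφ2
  set φ'2 : B →ₗ[F] A →ₗ[F] A := FS.φ' + LA.mul.flip ∘ₗ E with hφ'2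
  have hφ2a : ∀ i m, φ2 i m = FS.φ i m + LA.mul (E i) m := by
    intro i m; simp [hφ2]
  have hφ'2a : ∀ i m, φ'2 i m = FS.φ' i m + LA.mul m (E i) := by
    intro i m; simp [hφ'2, LinearMap.flip_apply]
  have hm1 : ∀ m n : A, LL.mul (m, 0) (n, 0) = (LA.mul m n, 0) :=
    fun m n => mul_inl_inl LA LB FS m n
  have hm2 : ∀ (i : B) (m : A), LL.mul (E i, i) (m, 0) = (φ2 i m, 0) := by
    intro i m
    rw [hmul, mul_S_inl, hφ2a]
  have hm3 : ∀ (m : A) (i : B), LL.mul (m, 0) (E i, i) = (φ'2 i m, 0) := by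
    intro m i
    rw [hmul, mul_inl_S, hφ'2a]
  have hm4 : ∀ i j : B, LL.mul (E i, i) (E j, j) = (E (LB.mul i j), LB.mul i j) :=
    fun i j => mul_S_S LA LB FS E hE i j
  refine ⟨⟨φ2, φ'2, 0, ?_, ?_, ?_, ?_, ?_, ?_, ?_⟩,
    ⟨E, fun i m => (hφ2a i m), fun i m => (hφ'2a i m), ?_⟩, rfl⟩
  · -- ax1
    intro i m n
    have h := LL.leibniz (m, 0) (E i, i) (n, 0)
    simp only [hm1, hm2, hm3, hm4, Prod.mk_add_mk, Prod.mk.injEq] at h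
    try simp only [LinearMap.zero_apply, map_zero, add_zero, zero_add]
    exact h.1
  · -- ax2
    intro i m n
    have h := LL.leibniz (m, 0) (n, 0) (E i, i)
    simp only [hm1, hm2, hm3, hm4, Prod.mk_add_mk, Prod.mk.injEq] at h
    try simp only [LinearMap.zero_apply, map_zero, add_zero, zero_add]
    exact h.1
  · -- ax3
    intro i j m
    have h := LL.leibniz (m, 0) (E i, i) (E j, j)
    simp only [hm1, hm2, hm3, hm4, Prod.mk_add_mk, Prod.mk.injEq] at h
    try simp only [LinearMap.zero_apply, map_zero, add_zero, zero_add]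
    exact h.1
  · -- ax4
    intro i m n
    have h := LL.leibniz (E i, i) (m, 0) (n, 0)
    simp only [hm1, hm2, hm3, hm4, Prod.mk_add_mk, Prod.mk.injEq] at h
    try simp only [LinearMap.zero_apply, map_zero, add_zero, zero_add]
    exact h.1
  · -- ax5
    intro i j m
    have h := LL.leibniz (E i, i) (E j, j) (m, 0)
    simp only [hm1, hm2, hm3, hm4, Prod.mk_add_mk, Prod.mk.injEq] at h
    try simp only [LinearMap.zero_apply, map_zero, add_zero, zero_add]
    exact h.1
  · -- ax6
    intro i j m
    have h := LL.leibniz (E i, i) (m, 0) (E j, j)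
    simp only [hm1, hm2, hm3, hm4, Prod.mk_add_mk, Prod.mk.injEq] at h
    try simp only [LinearMap.zero_apply, map_zero, add_zero, zero_add]
    exact h.1
  · -- ax7
    intro i j k
    try simp only [LinearMap.zero_apply, map_zero, add_zero, zero_add]
  · -- equivalence f-condition
    intro i j
    simp only [LinearMap.zero_apply]
    rw [hE i j]
    abel



/-- a factor system splits iff it is equivalent to one with `g = 0`
iff `f` has the coboundary-like form given by some linear `E : B → A`. -/
theorem split_tfae (LA : LeibnizAlg F A) (LB : LeibnizAlg F B)
    (FS : FactorSystem LA LB) :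
    (Nonempty (SplitWitness FS) ↔
      ∃ FS' : FactorSystem LA LB, FSEquiv FS FS' ∧ FS'.f = 0) ∧
    (Nonempty (SplitWitness FS) ↔
      ∃ E : B →ₗ[F] A, ∀ i j,
        FS.f i j = -FS.φ' j (E i) - FS.φ i (E j)
          - LA.mul (E i) (E j) + E (LB.mul i j)) := by
  have bToC : (∃ FS' : FactorSystem LA LB, FSEquiv FS FS' ∧ FS'.f = 0) →
      ∃ E : B →ₗ[F] A, ∀ i j,
        FS.f i j = -FS.φ' j (E i) - FS.φ i (E j)
          - LA.mul (E i) (E j) + E (LB.mul i j) := by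
    rintro ⟨FS', ⟨E, h1, h2, h3⟩, hf⟩
    refine ⟨E, fun i j => ?_⟩
    have h := h3 i j
    rw [hf] at h
    simp only [LinearMap.zero_apply] at h
    calc FS.f i j
        = (FS.f i j + FS.φ' j (E i) + FS.φ i (E j) + LA.mul (E i) (E j) - E (LB.mul i j))
          - FS.φ' j (E i) - FS.φ i (E j) - LA.mul (E i) (E j) + E (LB.mul i j) := by abel
      _ = -FS.φ' j (E i) - FS.φ i (E j) - LA.mul (E i) (E j) + E (LB.mul i j) := by
          rw [← h]; abel
  constructor
  · constructor
    · rintro ⟨W⟩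
      obtain ⟨E, hE⟩ := split_to_c W
      exact c_to_b LA LB FS E hE
    · intro hb
      obtain ⟨E, hE⟩ := bToC hb
      exact ⟨cToSplit LA LB FS E hE⟩
  · constructor
    · rintro ⟨W⟩
      exact split_to_c W
    · rintro ⟨E, hE⟩
      exact ⟨cToSplit LA LB FS E hE⟩
end
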